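/- arXiv:2402.02220 — 3 statements merged into one kernel-verified Lean document; each statement's English description precedes it below -/
import Mathlib

section
/- For every real k and every α > 0, the real parts of both eigenvalues λ±(k) of Λ̂(k) are nonpositive, and they vanish only at k = 0, where λ±(0) = ±i. -/
theorem eigenvalues_left_half_plane (α : ℝ) (hα : 0 < α) (μ : ℝ → ℂ)
    (hμ : ∀ k : ℝ, (μ k) ^ 2 = ((α ^ 2 * k ^ 4 / 4 - 1 - k ^ 2 : ℝ) : ℂ)) :
    (∀ k : ℝ,
      (((-(α * k ^ 2 / 2) : ℝ) : ℂ) + μ k).re ≤ 0 ∧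
      (((-(α * k ^ 2 / 2) : ℝ) : ℂ) - μ k).re ≤ 0) ∧
    (∀ k : ℝ,
      (((-(α * k ^ 2 / 2) : ℝ) : ℂ) + μ k).re = 0 ∨
      (((-(α * k ^ 2 / 2) : ℝ) : ℂ) - μ k).re = 0 → k = 0) ∧
    ({((-(α * (0:ℝ) ^ 2 / 2) : ℝ) : ℂ) + μ 0, ((-(α * (0:ℝ) ^ 2 / 2) : ℝ) : ℂ) - μ 0}
      : Set ℂ) = {Complex.I, -Complex.I} := by
  have key : ∀ k : ℝ, (μ k).re * (μ k).im = 0 ∧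
      (μ k).re ^ 2 - (μ k).im ^ 2 = α ^ 2 * k ^ 4 / 4 - 1 - k ^ 2 := by
    intro k
    have h := hμ k
    rw [Complex.ext_iff] at h
    simp only [pow_two, Complex.mul_re, Complex.mul_im, Complex.ofReal_re,
      Complex.ofReal_im] at h
    constructor
    · linarith [h.2]
    · nlinarith [h.1]
  have main : ∀ k : ℝ,
      (((-(α * k ^ 2 / 2) : ℝ) : ℂ) + μ k).re ≤ 0 ∧
      (((-(α * k ^ 2 / 2) : ℝ) : ℂ) - μ k).re ≤ 0 ∧
      ((((-(α * k ^ 2 / 2) : ℝ) : ℂ) + μ k).re = 0 ∨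
        (((-(α * k ^ 2 / 2) : ℝ) : ℂ) - μ k).re = 0 → k = 0) := by
    intro k
    obtain ⟨h1, h2⟩ := key k
    have hk2 : 0 ≤ α * k ^ 2 / 2 := by positivity
    simp only [Complex.add_re, Complex.sub_re, Complex.ofReal_re]
    rcases mul_eq_zero.mp h1 with hre | him
    · rw [hre]
      refine ⟨by linarith, by linarith, fun h => ?_⟩
      have : α * k ^ 2 = 0 := by rcases h with h | h <;> linarith
      have : k ^ 2 = 0 := by
        rcases mul_eq_zero.mp this with h | h
        · exact absurd h (ne_of_gt hα)
        · exact h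
      exact pow_eq_zero_iff (n := 2) (by norm_num) |>.mp this
    · rw [him] at h2
      have hlt : (μ k).re ^ 2 < (α * k ^ 2 / 2) ^ 2 := by nlinarith
      have hc : 0 < α * k ^ 2 / 2 := by
        rcases lt_or_eq_of_le hk2 with h | h
        · exact h
        · exfalso; nlinarith
      have hb1 : (μ k).re < α * k ^ 2 / 2 := by nlinarith
      have hb2 : -(α * k ^ 2 / 2) < (μ k).re := by nlinarith
      refine ⟨by linarith, by linarith, fun h => ?_⟩
      rcases h with h | h <;> linarith
  refine ⟨fun k => ⟨(main k).1, (main k).2.1⟩, fun k => (main k).2.2, ?_⟩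
  obtain ⟨h1, h2⟩ := key 0
  have h2' : (μ 0).re ^ 2 - (μ 0).im ^ 2 = -1 := by rw [h2]; ring
  have hre : (μ 0).re = 0 := by
    rcases mul_eq_zero.mp h1 with h | h
    · exact h
    · exfalso; nlinarith
  have him : (μ 0).im = 1 ∨ (μ 0).im = -1 := by
    have hp : ((μ 0).im - 1) * ((μ 0).im + 1) = 0 := by nlinarith
    rcases mul_eq_zero.mp hp with h | h
    · left; linarith
    · right; linarith
  have hz : ((-(α * (0:ℝ) ^ 2 / 2) : ℝ) : ℂ) = 0 := by norm_num
  rw [hz, zero_add, zero_sub]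
  rcases him with h | h
  · have : μ 0 = Complex.I := by
      apply Complex.ext <;> simp [hre, h]
    rw [this]
  · have : μ 0 = -Complex.I := by
      apply Complex.ext <;> simp [hre, h]
    rw [this, neg_neg, Set.pair_comm]
end

section
/- No-cancellation result: the system of equations β·(j₀/2i) + Q(j) = 0 for all j in the resonant set T = {(+,-,+,+), (+,+,-,+), (+,+,+,-), (-,+,-,-), (-,-,+,-), (-,-,-,+)} admits no solution (κ, β) ∈ ℝ² other than (κ, β) = (0, 0). -/
/-- Quadratic resonance phase at the origin. -/
noncomputable def phi2 (j₀ j₁ j₂ : ℤ) : ℂ := ((j₀ - j₁ - j₂ : ℤ) : ℂ) * Complex.I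

/-- Transformed cubic coefficient at the origin. -/
noncomputable def Qcoef (κ : ℝ) (j : ℤ × ℤ × ℤ × ℤ) : ℂ :=
  ((j.1 : ℂ) / (2 * Complex.I)) * (κ : ℂ) ^ 2 *
    ∑ h ∈ ({-1, 1} : Finset ℤ),
      ((h : ℂ) / (2 * Complex.I)) *
        (1 / phi2 j.1 h j.2.2.2 + 1 / phi2 j.1 j.2.1 h)

/-- The set of resonant sign tuples. -/
def resonantSet : Finset (ℤ × ℤ × ℤ × ℤ) :=
  {(1, -1, 1, 1), (1, 1, -1, 1), (1, 1, 1, -1),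
   (-1, 1, -1, -1), (-1, -1, 1, -1), (-1, -1, -1, 1)}

theorem no_cancellation (κ β : ℝ)
    (h : ∀ j ∈ resonantSet,
      (β : ℂ) * ((j.1 : ℂ) / (2 * Complex.I)) + Qcoef κ j = 0) :
    κ = 0 ∧ β = 0 := by
  have h1 := h (1, -1, 1, 1) (by decide)
  have h2 := h (1, 1, -1, 1) (by decide)
  simp only [Qcoef, phi2, resonantSet] at h1 h2
  norm_num [Finset.sum_insert, Complex.ext_iff, Complex.I_ne_zero, Complex.div_re,
    Complex.div_im, Complex.normSq, Complex.ofReal_pow] at h1 h2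
  rw [← Complex.ofReal_pow] at h1 h2
  simp only [Complex.ofReal_re] at h1 h2
  have hk : κ = 0 := by nlinarith [h1.2, h2.2, sq_nonneg κ]
  refine ⟨hk, ?_⟩
  have := h1.2
  rw [hk] at this
  linarith
end

section
/- Gronwall-type bootstrap: let η : [0,T] → ℝ be continuous, nonnegative, monotonically increasing with η(0) ≤ Cε, and suppose η(t) ≤ C(ε + η(t)²·ln(2+t)) whenever η(t) ≤ 1, where C ≥ 1, 0 < ε < ε₀ < 1/(4C²), and T ≤ e^{ε₀/ε} - 2. Then η(t) ≤ 2Cε for all t ∈ [0,T]. -/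
theorem gronwall_bootstrap (C ε ε₀ T : ℝ) (η : ℝ → ℝ)
    (hC : 1 ≤ C) (hε : 0 < ε) (hεε₀ : ε < ε₀) (hε₀ : ε₀ < 1 / (4 * C ^ 2))
    (hT : T ≤ Real.exp (ε₀ / ε) - 2)
    (hcont : ContinuousOn η (Set.Icc 0 T))
    (hmono : MonotoneOn η (Set.Icc 0 T))
    (hnonneg : ∀ t ∈ Set.Icc (0 : ℝ) T, 0 ≤ η t)
    (h0 : η 0 ≤ C * ε)
    (hiter : ∀ t ∈ Set.Icc (0 : ℝ) T, η t ≤ 1 →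
      η t ≤ C * (ε + η t ^ 2 * Real.log (2 + t))) :
    ∀ t ∈ Set.Icc (0 : ℝ) T, η t ≤ 2 * C * ε := by
  have hC0 : (0:ℝ) < C := lt_of_lt_of_le one_pos hC
  have hε₀pos : 0 < ε₀ := lt_trans hε hεε₀
  -- key: on [0,T], η t ≤ 2Cε implies η t < 2Cε
  have key : ∀ t ∈ Set.Icc (0 : ℝ) T, η t ≤ 2 * C * ε → η t < 2 * C * ε := by
    intro t ht hle
    have ht0 : 0 ≤ t := ht.1
    have hsmall : 2 * C * ε ≤ 1 := by
      have h1 : ε < 1 / (4 * C ^ 2) := lt_trans hεε₀ hε₀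
      have h2 : 4 * C ^ 2 > 0 := by positivity
      rw [lt_div_iff₀ h2] at h1
      nlinarith
    have h1 : η t ≤ 1 := le_trans hle hsmall
    have h2 := hiter t ht h1
    have hlog1 : Real.log (2 + t) ≤ ε₀ / ε := by
      have : 2 + t ≤ Real.exp (ε₀ / ε) := by linarith [ht.2]
      calc Real.log (2 + t) ≤ Real.log (Real.exp (ε₀ / ε)) :=
            Real.log_le_log (by linarith) this
        _ = ε₀ / ε := Real.log_exp _
    have hlog0 : 0 ≤ Real.log (2 + t) := Real.log_nonneg (by linarith)
    have hηnn : 0 ≤ η t := hnonneg t ht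
    have hsq : η t ^ 2 ≤ (2 * C * ε) ^ 2 := by nlinarith
    have h3 : η t ≤ C * (ε + (2 * C * ε) ^ 2 * (ε₀ / ε)) := by
      have : η t ^ 2 * Real.log (2 + t) ≤ (2 * C * ε) ^ 2 * (ε₀ / ε) := by
        apply mul_le_mul hsq hlog1 hlog0 (by positivity)
      nlinarith
    have h4 : (2 * C * ε) ^ 2 * (ε₀ / ε) = 4 * C ^ 2 * ε * ε₀ := by
      field_simp; ring
    rw [h4] at h3
    have h5 : 4 * C ^ 2 * ε₀ < 1 := by
      have h2 : (0:ℝ) < 4 * C ^ 2 := by positivity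
      rw [lt_div_iff₀ h2] at hε₀; linarith
    calc η t ≤ C * (ε + 4 * C ^ 2 * ε * ε₀) := h3
      _ < C * (ε + ε) := by
          have : 4 * C ^ 2 * ε * ε₀ < ε := by nlinarith
          nlinarith
      _ = 2 * C * ε := by ring
  rcases le_or_gt 0 T with hT0 | hT0
  swap
  · intro t ht; exact absurd (le_trans ht.1 ht.2) (not_le.mpr hT0)
  set A := Set.Icc 0 T ∩ η ⁻¹' Set.Iic (2 * C * ε) with hA
  have h0A : (0:ℝ) ∈ A := ⟨⟨le_refl _, hT0⟩, by
    simp only [Set.mem_preimage, Set.mem_Iic]; nlinarith⟩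
  have hAne : A.Nonempty := ⟨0, h0A⟩
  have hAbdd : BddAbove A := ⟨T, fun x hx => hx.1.2⟩
  have hAclosed : IsClosed A :=
    hcont.preimage_isClosed_of_isClosed isClosed_Icc isClosed_Iic
  set s := sSup A with hs
  have hsA : s ∈ A := hAclosed.csSup_mem hAne hAbdd
  have hsT : s = T := by
    by_contra hne
    have hslt : s < T := lt_of_le_of_ne hsA.1.2 hne
    have hηs : η s < 2 * C * ε := key s hsA.1 hsA.2
    have hev : ∀ᶠ x in nhdsWithin s (Set.Icc 0 T), η x < 2 * C * ε :=
      (hcont s hsA.1).eventually (isOpen_Iio.mem_nhds hηs)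
    have hsub : Set.Ioc s T ⊆ Set.Icc 0 T := fun x hx =>
      ⟨le_trans hsA.1.1 (le_of_lt hx.1), hx.2⟩
    have hev2 : ∀ᶠ x in nhdsWithin s (Set.Ioc s T), η x < 2 * C * ε :=
      hev.filter_mono (nhdsWithin_mono s hsub)
    have hnb : Filter.NeBot (nhdsWithin s (Set.Ioc s T)) := left_nhdsWithin_Ioc_neBot hslt
    have hmem : ∀ᶠ x in nhdsWithin s (Set.Ioc s T), x ∈ Set.Ioc s T :=
      self_mem_nhdsWithin
    obtain ⟨x, hx1, hx2⟩ := (hev2.and hmem).exists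
    have hxA : x ∈ A := ⟨hsub hx2, le_of_lt hx1⟩
    exact absurd (le_csSup hAbdd hxA) (not_le.mpr hx2.1)
  intro t ht
  have : η t ≤ η s := by
    rw [hsT]; exact hmono ht ⟨hT0, le_refl T⟩ ht.2
  exact le_trans this (by rw [hsT] at hsA ⊢; exact hsA.2)
end
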